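/- arXiv:1011.4134 — 2 statements merged into one kernel-verified Lean document; each statement's English description precedes it below -/
import Mathlib

section
/- Let P be a κ × κ × κ tensor of the form P(i,u,v) = Σ_{s=1}^κ π_s a_s(i) b_s(u) c_s(v) for vectors a_s, b_s, c_s ∈ ℝ^κ and scalars π_s (i.e., P has a rank-κ decomposition). Then for all indices i, j, k, the matrix slices P_(i) with (u,v)-entry P(i,u,v) satisfy P_(i) · adj(P_(j)) · P_(k) = P_(k) · adj(P_(j)) · P_(i). -/
/-! Each slice factors as `P_(x) = Bᵀ D_x C` with `D_x = diag(π_s a_s(x))`. Since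
`adj` is multiplicative, `P_(i) adj(P_(j)) P_(k) = det B det C · Bᵀ (D_i adj(D_j) D_k) C`,
and the middle factor is a product of diagonal matrices, hence symmetric in `i` and `k`. -/

namespace Matrix

variable {n R : Type*} [CommRing R]

theorem of_sum_mul_mul_eq_transpose_mul_diagonal_mul {σ m : Type*} [Fintype σ] [DecidableEq σ]
    (d : σ → R) (b : σ → n → R) (c : σ → m → R) :
    of (fun u v => ∑ s, d s * b s u * c s v) = (of b)ᵀ * diagonal d * of c := by
  ext u v
  rw [mul_apply]
  simp only [of_apply, mul_diagonal, transpose_apply]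
  exact Finset.sum_congr rfl fun s _ => by ring

variable [Fintype n] [DecidableEq n]

theorem mul_mul_adjugate_mul_mul (M N X Y Z : Matrix n n R) :
    M * X * N * (M * Y * N).adjugate * (M * Z * N) =
      (M.det * N.det) • (M * (X * Y.adjugate * Z) * N) := by
  calc M * X * N * (M * Y * N).adjugate * (M * Z * N)
      = M * X * (N * N.adjugate) * Y.adjugate * (M.adjugate * M) * Z * N := by
        simp only [adjugate_mul_distrib, Matrix.mul_assoc]
    _ = (M.det * N.det) • (M * (X * Y.adjugate * Z) * N) := by
        rw [mul_adjugate, adjugate_mul]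
        simp only [Matrix.mul_smul, Matrix.smul_mul, Matrix.mul_one, smul_smul,
          Matrix.mul_assoc]

theorem diagonal_mul_adjugate_mul_comm (d₁ d₂ d₃ : n → R) :
    diagonal d₁ * (diagonal d₂).adjugate * diagonal d₃ =
      diagonal d₃ * (diagonal d₂).adjugate * diagonal d₁ := by
  simp only [adjugate_diagonal, diagonal_mul_diagonal]
  congr 1
  funext s
  ring

end Matrix

/-- Let `P` be a `κ × κ × κ` tensor with a rank-`κ` decomposition
`P(i,u,v) = Σ_s π_s a_s(i) b_s(u) c_s(v)`.  Then the matrix slices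
`P_(i) = (P(i,u,v))_{u,v}` satisfy
`P_(i) · adj(P_(j)) · P_(k) = P_(k) · adj(P_(j)) · P_(i)` for all `i, j, k`. -/
theorem stmt_7 {κ : ℕ} (P : Fin κ → Fin κ → Fin κ → ℝ)
    (π : Fin κ → ℝ) (a b c : Fin κ → Fin κ → ℝ)
    (hP : ∀ i u v, P i u v = ∑ s, π s * a s i * b s u * c s v)
    (i j k : Fin κ) :
    (Matrix.of (P i)) * (Matrix.of (P j)).adjugate * (Matrix.of (P k)) =
      (Matrix.of (P k)) * (Matrix.of (P j)).adjugate * (Matrix.of (P i)) := by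
  have slice (x : Fin κ) :
      Matrix.of (P x) =
        (Matrix.of b).transpose * Matrix.diagonal (fun s => π s * a s x) * Matrix.of c := by
    rw [← Matrix.of_sum_mul_mul_eq_transpose_mul_diagonal_mul]
    exact congrArg Matrix.of (funext₂ (hP x))
  rw [slice i, slice j, slice k, Matrix.mul_mul_adjugate_mul_mul,
    Matrix.mul_mul_adjugate_mul_mul, Matrix.diagonal_mul_adjugate_mul_comm]
end

section
/- Let f_1, …, f_t : ℝ^d → ℝ be polynomials such that every subset of them of size min(s,t) is linearly independent (e.g., monomials x^{α_1}, …, x^{α_t} with distinct exponents α_j). Then for generic choices of points u_1, …, u_s ∈ ℝ^d (i.e., outside a proper algebraic subset), the s × t matrix with entries f_j(u_i) has full Kruskal row rank min(s,t): every min(s,t) of its rows are linearly independent. -/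
/-!
Fix a set `S` of `min s t` indices on which the `f j` are linearly independent. For each set `R`
of `min s t` rows, the `R × S` minor of `(f j (u i))` is a polynomial in the coordinates of the
`u i`, and it is not the zero polynomial: the rows `(f j x)_{j ∈ S}`, `x ∈ ℝ^d`, span `ℝ^S` by
linear independence, so some `min s t` of them form a nonsingular matrix. The product of all
these minors is the required `g`.
-/

open MvPolynomial Module

section EvaluationRows

variable {K α ι : Type*} [Field K] [Fintype ι]

theorem span_evaluationRows_eq_top {F : ι → α → K} (hF : LinearIndependent K F) :
    Submodule.span K (Set.range fun x j => F j x) = ⊤ := by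
  classical
  by_contra hspan
  obtain ⟨φ, hφ, hker⟩ := Submodule.exists_le_ker_of_lt_top _ (lt_top_iff_ne_top.2 hspan)
  set a : ι → K := fun i => φ fun j => if i = j then 1 else 0
  have hφa (v : ι → K) : φ v = ∑ i, v i * a i := LinearMap.pi_apply_eq_sum_univ φ v
  have ha : a = 0 := funext <| Fintype.linearIndependent_iff.mp hF a <| funext fun x => by
    have hrow : φ (fun j => F j x) = 0 := hker (Submodule.subset_span ⟨x, rfl⟩)
    simpa [hφa, Finset.sum_apply, mul_comm] using hrow
  exact hφ (LinearMap.ext fun v => by simp [hφa, ha])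

theorem exists_linearIndependent_evaluationRows {F : ι → α → K}
    (hF : LinearIndependent K F) :
    ∃ x : ι → α, LinearIndependent K fun i j => F j (x i) := by
  let b := Basis.ofSpan (span_evaluationRows_eq_top hF).ge
  let e := (Pi.basisFun K ι).indexEquiv b
  have hmem (i : ι) : b (e i) ∈ Set.range fun x j => F j x :=
    Basis.ofSpan_subset _ ⟨e i, rfl⟩
  choose x hx using hmem
  refine ⟨x, ?_⟩
  have hrows : (fun i j => F j (x i)) = b ∘ e := funext hx
  exact hrows ▸ b.linearIndependent.comp e e.injective

end EvaluationRows

/-- Entry `(p, j)` is `f j` evaluated at the `p`-th point, whose coordinates are the variables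
`(p, ·)`. -/
noncomputable def genericEvalMatrix {R σ ι : Type*} [CommSemiring R] (P : Type*)
    (f : ι → MvPolynomial σ R) : Matrix P ι (MvPolynomial (P × σ) R) :=
  Matrix.of fun p j => rename (Prod.mk p) (f j)

section GenericEvalMatrix

variable {R σ ι P κ : Type*} [Fintype κ] [DecidableEq κ]

theorem eval_det_submatrix_genericEvalMatrix [CommRing R] (f : ι → MvPolynomial σ R)
    (r : κ → P) (c : κ → ι) (u : P → σ → R) :
    eval (fun q : P × σ => u q.1 q.2) ((genericEvalMatrix P f).submatrix r c).det =
      (Matrix.of fun k l => eval (u (r k)) (f (c l))).det := by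
  rw [RingHom.map_det]
  congr 1
  ext k l
  simp [genericEvalMatrix, eval_rename_prod_mk]

theorem linearIndependent_of_eval_det_submatrix_genericEvalMatrix_ne_zero [CommRing R]
    [IsDomain R] {f : ι → MvPolynomial σ R} {r : κ → P} (c : κ → ι) {u : P → σ → R}
    (hu : eval (fun q : P × σ => u q.1 q.2) ((genericEvalMatrix P f).submatrix r c).det ≠ 0) :
    LinearIndependent R fun k j => eval (u (r k)) (f j) := by
  rw [eval_det_submatrix_genericEvalMatrix] at hu
  exact (Matrix.linearIndependent_rows_of_det_ne_zero hu).of_comp (LinearMap.funLeft R R c)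

theorem det_submatrix_genericEvalMatrix_ne_zero [Field R] {f : ι → MvPolynomial σ R}
    {r : κ → P} (hr : r.Injective) {c : κ → ι}
    (hc : LinearIndependent R fun k x => eval x (f (c k))) :
    ((genericEvalMatrix P f).submatrix r c).det ≠ 0 := by
  obtain ⟨x, hx⟩ := exists_linearIndependent_evaluationRows hc
  have hdet : (Matrix.of fun k l => eval (x k) (f (c l))).det ≠ 0 :=
    (Matrix.isUnit_iff_isUnit_det _).mp (Matrix.linearIndependent_rows_iff_isUnit.mp hx)
      |>.ne_zero
  refine ne_of_apply_ne (eval fun q : P × σ => Function.extend r x 0 q.1 q.2) ?_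
  rw [eval_det_submatrix_genericEvalMatrix, map_zero]
  simpa only [hr.extend_apply] using hdet

end GenericEvalMatrix

/-- Let `f_1, …, f_t : ℝ^d → ℝ` be polynomials such that every subset of them of size
`min(s,t)` is linearly independent (as polynomial functions).  Then for generic points
`u_1, …, u_s ∈ ℝ^d` — i.e., outside the zero set of some nonzero polynomial `g` on
`(ℝ^d)^s` — the `s × t` matrix with entries `f_j(u_i)` has full Kruskal row rank
`min(s,t)`: every `min(s,t)` of its rows are linearly independent. -/
theorem stmt_11 {d s t : ℕ} (f : Fin t → MvPolynomial (Fin d) ℝ)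
    (hf : ∀ S : Finset (Fin t), S.card = min s t →
      LinearIndependent ℝ
        (fun j : S => fun x : Fin d → ℝ => MvPolynomial.eval x (f j))) :
    ∃ g : MvPolynomial (Fin s × Fin d) ℝ, g ≠ 0 ∧
      ∀ u : Fin s → Fin d → ℝ,
        MvPolynomial.eval (fun p : Fin s × Fin d => u p.1 p.2) g ≠ 0 →
        ∀ R : Finset (Fin s), R.card = min s t →
          LinearIndependent ℝ
            (fun i : R => fun j : Fin t => MvPolynomial.eval (u i) (f j)) := by
  obtain ⟨S, -, hS⟩ := (Finset.univ : Finset (Fin t)).exists_subset_card_eq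
    (n := min s t) (by simp)
  have hcols (R : {R : Finset (Fin s) // R.card = min s t}) :
      ∃ c : R.1 → Fin t, LinearIndependent ℝ fun k x => eval x (f (c k)) := by
    let e : R.1 ≃ S := Fintype.equivOfCardEq (by simp [R.2, hS])
    exact ⟨Subtype.val ∘ e, (linearIndependent_equiv e).mpr (hf S hS)⟩
  choose c hc using hcols
  refine ⟨∏ R, ((genericEvalMatrix (Fin s) f).submatrix Subtype.val (c R)).det,
    Finset.prod_ne_zero_iff.mpr fun R _ => det_submatrix_genericEvalMatrix_ne_zero
      Subtype.val_injective (hc R), fun u hu R hR => ?_⟩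
  rw [map_prod, Finset.prod_ne_zero_iff] at hu
  exact linearIndependent_of_eval_det_submatrix_genericEvalMatrix_ne_zero _
    (hu ⟨R, hR⟩ (Finset.mem_univ _))
end
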